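/- Let (X, A, φ_X) be an inverse limit pro-C*-correspondence. Then π_λ^A(J_X^λ) = J_{X_λ} for all λ ∈ Λ, where J_{X_λ} = φ_{X_λ}^{-1}(K_{A_λ}(X_λ)) ∩ (ker φ_{X_λ})^⊥ is Katsura's ideal of the C*-correspondence (X_λ, A_λ, φ_{X_λ}). -/
import Mathlib


/-!
Self-contained toolkit for formalizing the paper
"A construction of pro-C*-algebras from pro-C*-correspondences"
(M. Joiţa, I. Zarakas).

A pro-C*-algebra is encoded by an (upward directed) family of C*-seminorms
`p : Λ → Seminorm ℂ A` on a star `ℂ`-algebra, which is separating (Hausdorff)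
and complete (every filter that is Cauchy with respect to every seminorm
converges seminorm-wise).  All topological notions (closures, continuity of
maps, ...) are expressed directly through the seminorms.  The canonical
C*-algebra `A_λ = A / ker p_λ` is dealt with through the seminorm `p_λ`
itself or, where the quotient is genuinely needed, through abstract
"quotient presentation" data (`QuotPres`).  Universal objects (Katsura
algebras of C*-correspondences, the pro-C*-algebra `𝒪_X`, crossed products)
are encoded through their universal properties.
-/

noncomputable section

/-- A pro-C*-algebra structure on a star `ℂ`-algebra `A`: a family of
C*-seminorms indexed by a preordered set `Λ`, monotone in the index,
separating (Hausdorff) and (seminorm-wise) complete. -/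
structure ProCStar (Λ : Type) [Preorder Λ] (A : Type)
    [Ring A] [StarRing A] [Algebra ℂ A] where
  p : Λ → Seminorm ℂ A
  p_mul : ∀ (l : Λ) (a b : A), p l (a * b) ≤ p l a * p l b
  p_star : ∀ (l : Λ) (a : A), p l (star a) = p l a
  p_cstar : ∀ (l : Λ) (a : A), p l (star a * a) = p l a * p l a
  p_mono : ∀ {l m : Λ}, l ≤ m → ∀ a : A, p l a ≤ p m a
  separating : ∀ a : A, (∀ l, p l a = 0) → a = 0
  complete : ∀ F : Filter A, F.NeBot →
    (∀ (l : Λ) (ε : ℝ), 0 < ε → ∃ s ∈ F, ∀ x ∈ s, ∀ y ∈ s, p l (x - y) < ε) →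
    ∃ a : A, ∀ (l : Λ) (ε : ℝ), 0 < ε → ∃ s ∈ F, ∀ x ∈ s, p l (x - a) < ε

/-- Closure of a subset with respect to a family of seminorms. -/
def semiClosure {Λ E : Type} [AddCommGroup E] [Module ℂ E]
    (q : Λ → Seminorm ℂ E) (s : Set E) : Set E :=
  {x | ∀ (l : Λ) (ε : ℝ), 0 < ε → ∃ y ∈ s, q l (x - y) < ε}

/-- A closed two-sided star ideal of a pro-C*-algebra. -/
structure IsProClosedIdeal {Λ : Type} [Preorder Λ] {A : Type}
    [Ring A] [StarRing A] [Algebra ℂ A] (S : ProCStar Λ A) (I : Set A) : Prop where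
  zero_mem : (0 : A) ∈ I
  add_mem : ∀ {a b : A}, a ∈ I → b ∈ I → a + b ∈ I
  smul_mem : ∀ (c : ℂ) {a : A}, a ∈ I → c • a ∈ I
  mul_mem_left : ∀ (b : A) {a : A}, a ∈ I → b * a ∈ I
  mul_mem_right : ∀ (b : A) {a : A}, a ∈ I → a * b ∈ I
  star_mem : ∀ {a : A}, a ∈ I → star a ∈ I
  closed : semiClosure S.p I ⊆ I

/-- The kernel of the seminorm `p_λ`, i.e. the kernel of `π_λ^A : A → A_λ`. -/
def kerSeminorm {Λ : Type} [Preorder Λ] {A : Type} [Ring A] [StarRing A] [Algebra ℂ A]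
    (S : ProCStar Λ A) (l : Λ) : Set A :=
  {a : A | S.p l a = 0}

/-- A continuous star-algebra morphism between pro-C*-algebras
(continuity is expressed by domination of seminorms, which for star morphisms
between pro-C*-algebras is equivalent to topological continuity). -/
def IsProCStarHom {Λ₁ Λ₂ A₁ A₂ : Type} [Preorder Λ₁] [Preorder Λ₂]
    [Ring A₁] [StarRing A₁] [Algebra ℂ A₁] [Ring A₂] [StarRing A₂] [Algebra ℂ A₂]
    (S₁ : ProCStar Λ₁ A₁) (S₂ : ProCStar Λ₂ A₂) (f : A₁ → A₂) : Prop :=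
  (∀ a b, f (a + b) = f a + f b) ∧ (∀ (c : ℂ) (a : A₁), f (c • a) = c • f a) ∧
    (∀ a b, f (a * b) = f a * f b) ∧ (∀ a, f (star a) = star (f a)) ∧
    ∀ l₂ : Λ₂, ∃ l₁ : Λ₁, ∀ a, S₂.p l₂ (f a) ≤ S₁.p l₁ a

/-- An isomorphism of pro-C*-algebras. -/
def IsProCStarIso {Λ₁ Λ₂ A₁ A₂ : Type} [Preorder Λ₁] [Preorder Λ₂]
    [Ring A₁] [StarRing A₁] [Algebra ℂ A₁] [Ring A₂] [StarRing A₂] [Algebra ℂ A₂]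
    (S₁ : ProCStar Λ₁ A₁) (S₂ : ProCStar Λ₂ A₂) (f : A₁ → A₂) : Prop :=
  IsProCStarHom S₁ S₂ f ∧ ∃ g : A₂ → A₁, IsProCStarHom S₂ S₁ g ∧
    Function.LeftInverse g f ∧ Function.RightInverse g f

/-- A (right) Hilbert pro-C*-module over the pro-C*-algebra `(A, S)`:
a right `A`-module with an `A`-valued inner product, complete with respect
to the induced family of seminorms `q l x = (p l ⟨x,x⟩)^{1/2}`
(the seminorms are part of the data, linked to the inner product by `q_sq`). -/
structure HilbertMod {Λ : Type} [Preorder Λ] {A : Type} [Ring A] [StarRing A] [Algebra ℂ A]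
    (S : ProCStar Λ A) (X : Type) [AddCommGroup X] [Module ℂ X] where
  smul : X → A → X
  add_smul' : ∀ (x y : X) (a : A), smul (x + y) a = smul x a + smul y a
  smul_add' : ∀ (x : X) (a b : A), smul x (a + b) = smul x a + smul x b
  smul_mul' : ∀ (x : X) (a b : A), smul x (a * b) = smul (smul x a) b
  csmul_smul' : ∀ (c : ℂ) (x : X) (a : A), smul (c • x) a = c • smul x a
  smul_csmul' : ∀ (c : ℂ) (x : X) (a : A), smul x (c • a) = c • smul x a
  inner : X → X → A
  inner_add_right : ∀ x y z : X, inner x (y + z) = inner x y + inner x z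
  inner_smul_right : ∀ (x y : X) (a : A), inner x (smul y a) = inner x y * a
  inner_csmul_right : ∀ (c : ℂ) (x y : X), inner x (c • y) = c • inner x y
  inner_star : ∀ x y : X, star (inner x y) = inner y x
  inner_self_pos : ∀ x : X, ∃ b : A, inner x x = star b * b
  inner_self_eq_zero : ∀ x : X, inner x x = 0 → x = 0
  q : Λ → Seminorm ℂ X
  q_sq : ∀ (l : Λ) (x : X), q l x * q l x = S.p l (inner x x)
  complete : ∀ F : Filter X, F.NeBot →
    (∀ (l : Λ) (ε : ℝ), 0 < ε → ∃ s ∈ F, ∀ x ∈ s, ∀ y ∈ s, q l (x - y) < ε) →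
    ∃ x₀ : X, ∀ (l : Λ) (ε : ℝ), 0 < ε → ∃ s ∈ F, ∀ x ∈ s, q l (x - x₀) < ε

section Operators

variable {Λ : Type} [Preorder Λ] {A : Type} [Ring A] [StarRing A] [Algebra ℂ A]
  {S : ProCStar Λ A} {X : Type} [AddCommGroup X] [Module ℂ X]

/-- The operator seminorm `p_{λ, L_A(X)}(T) = sup { q_λ(Tx) : q_λ(x) ≤ 1 }`. -/
def opSemi (M : HilbertMod S X) (l : Λ) (T : X → X) : ℝ :=
  sSup ((fun x => M.q l (T x)) '' {x : X | M.q l x ≤ 1})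

/-- `Tst` is an adjoint of `T`. -/
def AdjointPairOn (M : HilbertMod S X) (T Tst : X → X) : Prop :=
  ∀ x y : X, M.inner (T x) y = M.inner x (Tst y)

/-- Membership in `L_A(X)`: an adjointable module morphism. -/
def IsAdjointableOn (M : HilbertMod S X) (T : X → X) : Prop :=
  (∀ x y : X, T (x + y) = T x + T y) ∧ (∀ (c : ℂ) (x : X), T (c • x) = c • T x) ∧
    (∀ (x : X) (a : A), T (M.smul x a) = M.smul (T x) a) ∧
    ∃ Tst : X → X, AdjointPairOn M T Tst

/-- The "rank one" operator `θ_{y,x}(z) = y⟨x,z⟩_A`. -/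
def thetaOp (M : HilbertMod S X) (y x : X) : X → X :=
  fun z => M.smul y (M.inner x z)

/-- `Θ(X)`, the linear span of the operators `θ_{y,x}`. -/
def thetaSpan (M : HilbertMod S X) : Submodule ℂ (X → X) :=
  Submodule.span ℂ {T : X → X | ∃ y x : X, T = thetaOp M y x}

/-- `π_λ^{L_A(X)}(T) ∈ K_{A_λ}(X_λ)`, expressed through the seminorm `p_{λ,L_A(X)}`:
`T` is approximable by elements of `Θ(X)` modulo the kernel of `p_{λ,L_A(X)}`. -/
def memKlevel (M : HilbertMod S X) (l : Λ) (T : X → X) : Prop :=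
  ∀ ε : ℝ, 0 < ε → ∃ k ∈ thetaSpan M, opSemi M l (T - k) < ε

/-- Membership in `K_A(X)`, the closure of `Θ(X)` in `L_A(X)`. -/
def memK (M : HilbertMod S X) (T : X → X) : Prop :=
  IsAdjointableOn M T ∧ ∀ l : Λ, memKlevel M l T

/-- `XI = span { x a : x ∈ X, a ∈ I }`. -/
def smulSet (M : HilbertMod S X) (I : Set A) : Submodule ℂ X :=
  Submodule.span ℂ {z : X | ∃ x : X, ∃ a ∈ I, z = M.smul x a}

end Operators

/-- A pro-C*-correspondence `(X, A, φ_X)`: a Hilbert pro-C*-module `X` over `A`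
together with a continuous star morphism `φ_X : A → L_A(X)`. -/
structure Corr {Λ : Type} [Preorder Λ] {A : Type} [Ring A] [StarRing A] [Algebra ℂ A]
    (S : ProCStar Λ A) {X : Type} [AddCommGroup X] [Module ℂ X] (M : HilbertMod S X) where
  phi : A → X → X
  phi_add : ∀ a b : A, phi (a + b) = phi a + phi b
  phi_csmul : ∀ (c : ℂ) (a : A), phi (c • a) = c • phi a
  phi_mul : ∀ (a b : A) (x : X), phi (a * b) x = phi a (phi b x)
  phi_adj : ∀ a : A, IsAdjointableOn M (phi a)
  phi_star : ∀ a : A, AdjointPairOn M (phi a) (phi (star a))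
  phi_cont : ∀ l : Λ, ∃ m : Λ, ∀ a : A, opSemi M l (phi a) ≤ S.p m a

section CorrDefs

variable {Λ : Type} [Preorder Λ] {A : Type} [Ring A] [StarRing A] [Algebra ℂ A]
  {S : ProCStar Λ A} {X : Type} [AddCommGroup X] [Module ℂ X] {M : HilbertMod S X}

/-- `X(I)`, the closed span of `{ ⟨y, φ_X(a) x⟩_A : a ∈ I, x, y ∈ X }`. -/
def XofIdeal (C : Corr S M) (I : Set A) : Set A :=
  semiClosure S.p
    ↑(Submodule.span ℂ {c : A | ∃ a ∈ I, ∃ x y : X, c = M.inner y (C.phi a x)})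

/-- `X⁻¹(I) = { a ∈ A : ⟨y, φ_X(a) x⟩_A ∈ I for all x, y ∈ X }`. -/
def XinvIdeal (C : Corr S M) (I : Set A) : Set A :=
  {a : A | ∀ x y : X, M.inner y (C.phi a x) ∈ I}

/-- The ideal `J_X^λ = { a : π_λ^{L_A(X)}(φ_X(a)) ∈ K_{A_λ}(X_λ) and
π_λ^A(ab) = 0 for every b ∈ ker (π_λ^{L_A(X)} ∘ φ_X) }`, all conditions being
expressed through the seminorms `p_λ` and `p_{λ,L_A(X)}`. -/
def Jlevel (C : Corr S M) (l : Λ) : Set A :=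
  {a : A | memKlevel M l (C.phi a) ∧
    ∀ b : A, opSemi M l (C.phi b) = 0 → S.p l (a * b) = 0}

/-- The ideal `𝒥_X = ⋂_λ J_X^λ`. -/
def JX (C : Corr S M) : Set A :=
  ⋂ l : Λ, Jlevel C l

/-- Katsura's ideal `J_X = φ_X⁻¹(K_A(X)) ∩ (ker φ_X)^⊥` of a C*-correspondence
(to be used when the index set is a singleton, i.e. for C*-algebras). -/
def KatsuraIdeal (C : Corr S M) : Set A :=
  {a : A | memK M (C.phi a) ∧ ∀ b : A, C.phi b = 0 → a * b = 0}

/-- `(X, A, φ_X)` is an inverse limit pro-C*-correspondence: `φ_X` is compatible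
with the Arens–Michael decompositions, i.e. `φ_X(ker p_λ) ⊆ ker π_λ^{L_A(X)}`
for every `λ`, so that `φ_X = lim_λ φ_{X_λ}`. -/
def IsInvLimCorr (C : Corr S M) : Prop :=
  ∀ (l : Λ) (a : A), S.p l a = 0 → opSemi M l (C.phi a) = 0

/-- An ideal `I` is positively invariant if `X(I) ⊆ I`. -/
def PosInvariant (C : Corr S M) (I : Set A) : Prop :=
  XofIdeal C I ⊆ I

/-- An ideal `I` is negatively invariant if
`π_μ^A(J_X^λ) ∩ π_μ^A(X⁻¹(I)) ⊆ π_μ^A(I)` for all `λ ≥ μ`: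
whenever `a ∈ J_X^λ` and `a' ∈ X⁻¹(I)` have the same image in `A_μ`, this
common image lies in `π_μ^A(I)`. -/
def NegInvariant (C : Corr S M) (I : Set A) : Prop :=
  ∀ (l m : Λ), m ≤ l → ∀ a ∈ Jlevel C l, ∀ a' ∈ XinvIdeal C I,
    S.p m (a - a') = 0 → ∃ i ∈ I, S.p m (a - i) = 0

/-- An invariant ideal: both positively and negatively invariant. -/
def InvariantIdeal (C : Corr S M) (I : Set A) : Prop :=
  PosInvariant C I ∧ NegInvariant C I

end CorrDefs

/-- A morphism `(Π, T)` between pro-C*-correspondences. -/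
structure CorrMor {Λ : Type} [Preorder Λ] {A : Type} [Ring A] [StarRing A] [Algebra ℂ A]
    {S : ProCStar Λ A} {X : Type} [AddCommGroup X] [Module ℂ X] {M : HilbertMod S X}
    (C : Corr S M)
    {Δ : Type} [Preorder Δ] {B : Type} [Ring B] [StarRing B] [Algebra ℂ B]
    {SB : ProCStar Δ B} {Y : Type} [AddCommGroup Y] [Module ℂ Y] {N : HilbertMod SB Y}
    (D : Corr SB N) where
  Pi : A → B
  Pi_add : ∀ a b : A, Pi (a + b) = Pi a + Pi b
  Pi_csmul : ∀ (c : ℂ) (a : A), Pi (c • a) = c • Pi a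
  Pi_mul : ∀ a b : A, Pi (a * b) = Pi a * Pi b
  Pi_star : ∀ a : A, Pi (star a) = star (Pi a)
  Pi_cont : ∀ d : Δ, ∃ l : Λ, ∀ a : A, SB.p d (Pi a) ≤ S.p l a
  T : X → Y
  T_inner : ∀ x₁ x₂ : X, N.inner (T x₁) (T x₂) = Pi (M.inner x₁ x₂)
  T_phi : ∀ (a : A) (x : X), D.phi (Pi a) (T x) = T (C.phi a x)

/-- A representation `(π, t)` of a pro-C*-correspondence `(X, A, φ_X)`
on a pro-C*-algebra `B`, i.e. a morphism into the identity correspondence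
`(B, B, id_B)`. -/
structure CorrRep {Λ : Type} [Preorder Λ] {A : Type} [Ring A] [StarRing A] [Algebra ℂ A]
    {S : ProCStar Λ A} {X : Type} [AddCommGroup X] [Module ℂ X] {M : HilbertMod S X}
    (C : Corr S M)
    {ΛB : Type} [Preorder ΛB] {B : Type} [Ring B] [StarRing B] [Algebra ℂ B]
    (SB : ProCStar ΛB B) where
  pi : A → B
  pi_add : ∀ a b : A, pi (a + b) = pi a + pi b
  pi_csmul : ∀ (c : ℂ) (a : A), pi (c • a) = c • pi a
  pi_mul : ∀ a b : A, pi (a * b) = pi a * pi b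
  pi_star : ∀ a : A, pi (star a) = star (pi a)
  pi_cont : ∀ d : ΛB, ∃ l : Λ, ∀ a : A, SB.p d (pi a) ≤ S.p l a
  t : X → B
  t_add : ∀ x y : X, t (x + y) = t x + t y
  t_csmul : ∀ (c : ℂ) (x : X), t (c • x) = c • t x
  t_inner : ∀ x y : X, star (t x) * t y = pi (M.inner x y)
  t_phi : ∀ (a : A) (x : X), t (C.phi a x) = pi a * t x

/-- Covariance of a representation `(π, t)`: `ψ_t(φ_X(a)) = π(a)` for every
`a ∈ 𝒥_X`, expressed through simultaneous approximation: there is a net of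
finite "rank one" sums `∑ θ_{y_i, x_i}` converging to `φ_X(a)` in `L_A(X)`
whose images `∑ t(y_i) t(x_i)*` converge to `π(a)` in `B`. -/
def IsCovariantRep {Λ : Type} [Preorder Λ] {A : Type} [Ring A] [StarRing A] [Algebra ℂ A]
    {S : ProCStar Λ A} {X : Type} [AddCommGroup X] [Module ℂ X] {M : HilbertMod S X}
    {C : Corr S M}
    {ΛB : Type} [Preorder ΛB] {B : Type} [Ring B] [StarRing B] [Algebra ℂ B]
    {SB : ProCStar ΛB B} (R : CorrRep C SB) : Prop :=
  ∀ a ∈ JX C, ∃ (ι : Type) (F : Filter ι), F.NeBot ∧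
    ∃ (n : ι → ℕ) (xs ys : (j : ι) → Fin (n j) → X),
      (∀ l : Λ, Filter.Tendsto
        (fun j => opSemi M l (C.phi a - ∑ i, thetaOp M (ys j i) (xs j i))) F (nhds 0)) ∧
      (∀ d : ΛB, Filter.Tendsto
        (fun j => SB.p d (R.pi a - ∑ i, R.t (ys j i) * star (R.t (xs j i)))) F (nhds 0))

/-- The pro-C*-algebra `𝒪_X` associated to a pro-C*-correspondence, presented
by a universal covariant representation `(π_X, t_X)` whose images generate it. -/
structure UniversalCovRep {Λ : Type} [Preorder Λ] {A : Type} [Ring A] [StarRing A] [Algebra ℂ A]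
    {S : ProCStar Λ A} {X : Type} [AddCommGroup X] [Module ℂ X] {M : HilbertMod S X}
    (C : Corr S M)
    {ΛO : Type} [Preorder ΛO] {O : Type} [Ring O] [StarRing O] [Algebra ℂ O] [StarModule ℂ O]
    (SO : ProCStar ΛO O) where
  rep : CorrRep C SO
  covariant : IsCovariantRep rep
  generates : ∀ o : O, o ∈ semiClosure SO.p
    ↑(NonUnitalStarAlgebra.adjoin ℂ (Set.range rep.pi ∪ Set.range rep.t))
  universal : ∀ {ΛB : Type} [Preorder ΛB] {B : Type} [Ring B] [StarRing B] [Algebra ℂ B]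
    (SB : ProCStar ΛB B) (R : CorrRep C SB), IsCovariantRep R →
    ∃! Φ : O → B, IsProCStarHom SO SB Φ ∧
      (∀ a, Φ (rep.pi a) = R.pi a) ∧ (∀ x, Φ (rep.t x) = R.t x)

/-- A presentation of the quotient C*-correspondence
`(X_λ, A_λ, φ_{X_λ})` of `(X, A, φ_X)` at level `λ`: a C*-algebra `(B, SB)`
(a pro-C*-algebra over a singleton index set) which is a quotient of `A` by
`ker p_λ`, a Hilbert C*-module `N` over it which is a quotient of `X` by
`ker p_λ^A`, and the induced correspondence `D`. -/
structure QuotPres {Λ : Type} [Preorder Λ] {A : Type} [Ring A] [StarRing A] [Algebra ℂ A]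
    {S : ProCStar Λ A} {X : Type} [AddCommGroup X] [Module ℂ X] {M : HilbertMod S X}
    (C : Corr S M) (l : Λ)
    {B : Type} [Ring B] [StarRing B] [Algebra ℂ B] (SB : ProCStar PUnit B)
    {Y : Type} [AddCommGroup Y] [Module ℂ Y] (N : HilbertMod SB Y) (D : Corr SB N)
    (piq : A → B) (sig : X → Y) : Prop where
  piq_add : ∀ a b : A, piq (a + b) = piq a + piq b
  piq_csmul : ∀ (c : ℂ) (a : A), piq (c • a) = c • piq a
  piq_mul : ∀ a b : A, piq (a * b) = piq a * piq b
  piq_star : ∀ a : A, piq (star a) = star (piq a)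
  piq_surj : Function.Surjective piq
  piq_norm : ∀ a : A, SB.p PUnit.unit (piq a) = S.p l a
  sig_add : ∀ x y : X, sig (x + y) = sig x + sig y
  sig_csmul : ∀ (c : ℂ) (x : X), sig (c • x) = c • sig x
  sig_surj : Function.Surjective sig
  sig_smul : ∀ (x : X) (a : A), sig (M.smul x a) = N.smul (sig x) (piq a)
  sig_inner : ∀ x y : X, N.inner (sig x) (sig y) = piq (M.inner x y)
  phi_comm : ∀ (a : A) (x : X), D.phi (piq a) (sig x) = sig (C.phi a x)

/-- Katsura's C*-algebra `𝒪_{X_ω}` associated to a `𝒯`-pair `ω = ({0}, I')` of a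
C*-correspondence, presented through a representation `(π_ω, t_ω)` whose
associated `𝒯`-pair is `ω`, whose images generate the algebra, and which is
universal among representations `(π, t)` with `ω ⊆ ω_{(π,t)}` (Katsura's
Theorem 7.1). -/
structure TPairAlg {B : Type} [Ring B] [StarRing B] [Algebra ℂ B] {SB : ProCStar PUnit B}
    {Y : Type} [AddCommGroup Y] [Module ℂ Y] {N : HilbertMod SB Y} (D : Corr SB N)
    (I' : Set B)
    {O : Type} [Ring O] [StarRing O] [Algebra ℂ O] [StarModule ℂ O]
    (SO : ProCStar PUnit O) where
  rep : CorrRep D SO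
  ker_pi : ∀ b : B, rep.pi b = 0 → b = 0
  tpair_snd : ∀ b : B, b ∈ I' ↔ rep.pi b ∈ semiClosure SO.p
    ↑(Submodule.span ℂ {z : O | ∃ x y : Y, z = rep.t x * star (rep.t y)})
  generates : ∀ o : O, o ∈ semiClosure SO.p
    ↑(NonUnitalStarAlgebra.adjoin ℂ (Set.range rep.pi ∪ Set.range rep.t))
  universal : ∀ {ΛB : Type} [Preorder ΛB] {B' : Type} [Ring B'] [StarRing B'] [Algebra ℂ B']
    (SB' : ProCStar ΛB B') (R : CorrRep D SB'),
    (∀ b ∈ I', R.pi b ∈ semiClosure SB'.p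
      ↑(Submodule.span ℂ {z : B' | ∃ x y : Y, z = R.t x * star (R.t y)})) →
    ∃! Φ : O → B', IsProCStarHom SO SB' Φ ∧
      (∀ b, Φ (rep.pi b) = R.pi b) ∧ (∀ x, Φ (rep.t x) = R.t x)

/-- A Hilbert `A`–`A` pro-C*-bimodule: a right Hilbert pro-C*-module which is
also a left Hilbert pro-C*-module, with `_A⟨x,y⟩ z = x ⟨y,z⟩_A` and the
compatibility of the respective families of seminorms. -/
structure HilbertBimod {Λ : Type} [Preorder Λ] {A : Type} [Ring A] [StarRing A] [Algebra ℂ A]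
    (S : ProCStar Λ A) (X : Type) [AddCommGroup X] [Module ℂ X]
    extends HilbertMod S X where
  lsmul : A → X → X
  lsmul_add' : ∀ (a : A) (x y : X), lsmul a (x + y) = lsmul a x + lsmul a y
  add_lsmul' : ∀ (a b : A) (x : X), lsmul (a + b) x = lsmul a x + lsmul b x
  lsmul_mul' : ∀ (a b : A) (x : X), lsmul (a * b) x = lsmul a (lsmul b x)
  lsmul_csmul' : ∀ (c : ℂ) (a : A) (x : X), lsmul a (c • x) = c • lsmul a x
  csmul_lsmul' : ∀ (c : ℂ) (a : A) (x : X), lsmul (c • a) x = c • lsmul a x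
  lsmul_smul' : ∀ (a : A) (x : X) (b : A), lsmul a (smul x b) = smul (lsmul a x) b
  linner : X → X → A
  linner_add_left : ∀ x y z : X, linner (x + z) y = linner x y + linner z y
  linner_lsmul_left : ∀ (a : A) (x y : X), linner (lsmul a x) y = a * linner x y
  linner_csmul_left : ∀ (c : ℂ) (x y : X), linner (c • x) y = c • linner x y
  linner_star : ∀ x y : X, star (linner x y) = linner y x
  linner_self_pos : ∀ x : X, ∃ b : A, linner x x = star b * b
  linner_self_eq_zero : ∀ x : X, linner x x = 0 → x = 0
  bimodule_rel : ∀ x y z : X, lsmul (linner x y) z = smul x (inner y z)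
  lq : Λ → Seminorm ℂ X
  lq_sq : ∀ (l : Λ) (x : X), lq l x * lq l x = S.p l (linner x x)
  q_lsmul : ∀ (l : Λ) (a : A) (x : X), q l (lsmul a x) ≤ S.p l a * q l x
  lq_smul : ∀ (l : Λ) (x : X) (a : A), lq l (smul x a) ≤ S.p l a * lq l x

/-- The closed ideal `_AI`, the closed span of `{ _A⟨x,y⟩ : x, y ∈ X }`. -/
def leftIdealSet {Λ : Type} [Preorder Λ] {A : Type} [Ring A] [StarRing A] [Algebra ℂ A]
    {S : ProCStar Λ A} {X : Type} [AddCommGroup X] [Module ℂ X]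
    (W : HilbertBimod S X) : Set A :=
  semiClosure S.p ↑(Submodule.span ℂ {a : A | ∃ x y : X, a = W.linner x y})

/-- A covariant representation `(φ_X, φ_A)` of a Hilbert `A`–`A`
pro-C*-bimodule on a pro-C*-algebra `B` (Joiţa–Zarakas, Definition 3.1). -/
structure BimodCovRep {Λ : Type} [Preorder Λ] {A : Type} [Ring A] [StarRing A] [Algebra ℂ A]
    {S : ProCStar Λ A} {X : Type} [AddCommGroup X] [Module ℂ X] (W : HilbertBimod S X)
    {ΛB : Type} [Preorder ΛB] {B : Type} [Ring B] [StarRing B] [Algebra ℂ B]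
    (SB : ProCStar ΛB B) where
  phiA : A → B
  phiA_add : ∀ a b : A, phiA (a + b) = phiA a + phiA b
  phiA_csmul : ∀ (c : ℂ) (a : A), phiA (c • a) = c • phiA a
  phiA_mul : ∀ a b : A, phiA (a * b) = phiA a * phiA b
  phiA_star : ∀ a : A, phiA (star a) = star (phiA a)
  phiA_cont : ∀ d : ΛB, ∃ l : Λ, ∀ a : A, SB.p d (phiA a) ≤ S.p l a
  phiX : X → B
  cov_smul : ∀ (x : X) (a : A), phiX (W.smul x a) = phiX x * phiA a
  cov_lsmul : ∀ (a : A) (x : X), phiX (W.lsmul a x) = phiA a * phiX x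
  cov_inner : ∀ x y : X, star (phiX x) * phiX y = phiA (W.inner x y)
  cov_linner : ∀ x y : X, phiX x * star (phiX y) = phiA (W.linner x y)

/-- The crossed product `A ×_X ℤ` of `A` by a Hilbert `A`–`A` pro-C*-bimodule
`X` (Joiţa–Zarakas, Definition 3.3): a pro-C*-algebra with a covariant
representation `(i_X, i_A)` through which every covariant representation
factors uniquely. -/
structure CrossedProdBimod {Λ : Type} [Preorder Λ] {A : Type} [Ring A] [StarRing A] [Algebra ℂ A]
    {S : ProCStar Λ A} {X : Type} [AddCommGroup X] [Module ℂ X] (W : HilbertBimod S X)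
    {ΛO : Type} [Preorder ΛO] {O : Type} [Ring O] [StarRing O] [Algebra ℂ O]
    (SO : ProCStar ΛO O) where
  iRep : BimodCovRep W SO
  universal : ∀ {ΛB : Type} [Preorder ΛB] {B : Type} [Ring B] [StarRing B] [Algebra ℂ B]
    (SB : ProCStar ΛB B) (R : BimodCovRep W SB),
    ∃! Φ : O → B, IsProCStarHom SO SB Φ ∧
      (∀ x, Φ (iRep.phiX x) = R.phiX x) ∧ (∀ a, Φ (iRep.phiA a) = R.phiA a)

/-- A nondegenerate covariant representation `(u, φ)` of the pro-C*-dynamical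
system `(A, α, ℤ)` (with action `n ↦ αⁿ = αz n`) on a pro-C*-algebra `B`. -/
structure DynCovRep {Λ : Type} [Preorder Λ] {A : Type} [Ring A] [StarRing A] [Algebra ℂ A]
    (S : ProCStar Λ A) (αz : ℤ → A → A)
    {ΛB : Type} [Preorder ΛB] {B : Type} [Ring B] [StarRing B] [Algebra ℂ B]
    (SB : ProCStar ΛB B) where
  phi : A → B
  phi_add : ∀ a b : A, phi (a + b) = phi a + phi b
  phi_csmul : ∀ (c : ℂ) (a : A), phi (c • a) = c • phi a
  phi_mul : ∀ a b : A, phi (a * b) = phi a * phi b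
  phi_star : ∀ a : A, phi (star a) = star (phi a)
  phi_cont : ∀ d : ΛB, ∃ l : Λ, ∀ a : A, SB.p d (phi a) ≤ S.p l a
  u : ℤ → B
  u_zero : u 0 = 1
  u_add : ∀ m n : ℤ, u (m + n) = u m * u n
  u_star : ∀ n : ℤ, star (u n) = u (-n)
  cov : ∀ (n : ℤ) (a : A), u n * phi a = phi (αz n a) * u n
  nondeg : ∀ b : B, b ∈ semiClosure SB.p
    ↑(Submodule.span ℂ {z : B | ∃ (a : A) (b' : B), z = phi a * b'})

/-- The crossed product `A ×_α ℤ`: the universal pro-C*-algebra with respect to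
nondegenerate covariant representations of `(A, α, ℤ)`. -/
structure CrossedProdDyn {Λ : Type} [Preorder Λ] {A : Type} [Ring A] [StarRing A] [Algebra ℂ A]
    (S : ProCStar Λ A) (αz : ℤ → A → A)
    {ΛO : Type} [Preorder ΛO] {O : Type} [Ring O] [StarRing O] [Algebra ℂ O]
    (SO : ProCStar ΛO O) where
  iRep : DynCovRep S αz SO
  universal : ∀ {ΛB : Type} [Preorder ΛB] {B : Type} [Ring B] [StarRing B] [Algebra ℂ B]
    (SB : ProCStar ΛB B) (R : DynCovRep S αz SB),
    ∃! Φ : O → B, IsProCStarHom SO SB Φ ∧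
      (∀ a, Φ (iRep.phi a) = R.phi a) ∧ (∀ n, Φ (iRep.u n) = R.u n)

end

/-! ### Auxiliary lemmas for Statement 6 -/

section AuxStmt6

open Filter

variable {Λ : Type} [Preorder Λ] {A : Type} [Ring A] [StarRing A] [Algebra ℂ A]
  {S : ProCStar Λ A} {X : Type} [AddCommGroup X] [Module ℂ X]

theorem ProCStar.apply_nonneg' (S : ProCStar Λ A) (l : Λ) (a : A) : 0 ≤ S.p l a :=
  apply_nonneg _ _

/-- `star` commutes with real scalars in any pro-C*-algebra. -/
theorem ProCStar.star_real_smul (S : ProCStar Λ A) (t : ℝ) (b : A) :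
    star ((t : ℂ) • b) = (t : ℂ) • star b := by
  have hrat : ∀ (c : ℚ) (x : A), star ((c : ℂ) • x) = (c : ℂ) • star x := fun c x =>
    map_ratCast_smul (starAddEquiv : A ≃+ A) ℂ ℂ c x
  have key : ∀ l : Λ, S.p l (star ((t : ℂ) • b) - (t : ℂ) • star b) = 0 := by
    intro l
    have hb : ∀ ε : ℝ, 0 < ε →
        S.p l (star ((t : ℂ) • b) - (t : ℂ) • star b) ≤ ε * (2 * S.p l b) := by
      intro ε hε
      obtain ⟨c, hc⟩ := exists_rat_near t hε
      have hcast : (((c : ℝ) : ℂ)) = ((c : ℚ) : ℂ) := by norm_cast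
      have hsplit : (t : ℂ) • b = ((t - (c : ℝ) : ℝ) : ℂ) • b + ((c : ℝ) : ℂ) • b := by
        rw [← add_smul]
        congr 1
        push_cast
        ring
      have hsplit' : (t : ℂ) • star b
          = ((t - (c : ℝ) : ℝ) : ℂ) • star b + ((c : ℝ) : ℂ) • star b := by
        rw [← add_smul]
        congr 1
        push_cast
        ring
      have hdec : star ((t : ℂ) • b) - (t : ℂ) • star b
          = star (((t - (c : ℝ) : ℝ) : ℂ) • b) - ((t - (c : ℝ) : ℝ) : ℂ) • star b := by
        rw [hsplit, star_add, hcast, hrat, hsplit', ← hcast]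
        abel
      rw [hdec]
      have h1 : S.p l (star (((t - (c : ℝ) : ℝ) : ℂ) • b)
            - ((t - (c : ℝ) : ℝ) : ℂ) • star b)
          ≤ S.p l (star (((t - (c : ℝ) : ℝ) : ℂ) • b))
            + S.p l (((t - (c : ℝ) : ℝ) : ℂ) • star b) := map_sub_le_add _ _ _
      have h2 : S.p l (star (((t - (c : ℝ) : ℝ) : ℂ) • b)) = |t - (c : ℝ)| * S.p l b := by
        rw [S.p_star, map_smul_eq_mul, Complex.norm_real, Real.norm_eq_abs]
      have h3 : S.p l (((t - (c : ℝ) : ℝ) : ℂ) • star b) = |t - (c : ℝ)| * S.p l b := by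
        rw [map_smul_eq_mul, Complex.norm_real, Real.norm_eq_abs, S.p_star]
      have hpb : 0 ≤ S.p l b := apply_nonneg _ _
      have habs : |t - (c : ℝ)| ≤ ε := le_of_lt hc
      nlinarith [abs_nonneg (t - (c : ℝ))]
    have hpd : 0 ≤ S.p l (star ((t : ℂ) • b) - (t : ℂ) • star b) := apply_nonneg _ _
    rcases eq_or_lt_of_le (apply_nonneg (S.p l) b) with hpb | hpb
    · have h1 := hb 1 one_pos
      rw [← hpb] at h1
      linarith
    · by_contra hne
      have hpos : 0 < S.p l (star ((t : ℂ) • b) - (t : ℂ) • star b) :=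
        lt_of_le_of_ne hpd (Ne.symm hne)
      set d := S.p l (star ((t : ℂ) • b) - (t : ℂ) • star b) with hd
      set K := 2 * S.p l b with hK
      have hKpos : 0 < K := by simp only [hK]; linarith
      have h2 := hb (d / (2 * K)) (div_pos hpos (by linarith))
      have h3 : d / (2 * K) * K = d / 2 := by
        field_simp
      rw [h3] at h2
      linarith
  have := S.separating _ key
  rw [sub_eq_zero] at this
  exact this

namespace HilbertMod

theorem smul_zero'' (M : HilbertMod S X) (x : X) : M.smul x 0 = 0 := by
  have h := M.smul_csmul' 0 x 0
  rw [zero_smul, zero_smul] at h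
  exact h

theorem inner_zero_right' (M : HilbertMod S X) (x : X) : M.inner x 0 = 0 := by
  have h := M.inner_csmul_right 0 x 0
  rw [zero_smul, zero_smul] at h
  exact h

theorem inner_zero_left' (M : HilbertMod S X) (y : X) : M.inner 0 y = 0 := by
  rw [← M.inner_star, M.inner_zero_right', star_zero]

theorem inner_add_left' (M : HilbertMod S X) (x y z : X) :
    M.inner (x + y) z = M.inner x z + M.inner y z := by
  rw [← M.inner_star z (x + y), M.inner_add_right, star_add, M.inner_star, M.inner_star]

theorem inner_smul_left' (M : HilbertMod S X) (x y : X) (a : A) :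
    M.inner (M.smul x a) y = star a * M.inner x y := by
  calc M.inner (M.smul x a) y = star (M.inner y (M.smul x a)) := (M.inner_star _ _).symm
    _ = star (M.inner y x * a) := by rw [M.inner_smul_right]
    _ = star a * star (M.inner y x) := star_mul _ _
    _ = star a * M.inner x y := by rw [M.inner_star]

theorem q_inner_self (M : HilbertMod S X) (l : Λ) (x : X) :
    S.p l (M.inner x x) = M.q l x * M.q l x := (M.q_sq l x).symm

theorem q_smul_le (M : HilbertMod S X) (l : Λ) (x : X) (a : A) :
    M.q l (M.smul x a) ≤ M.q l x * S.p l a := by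
  have hinner : M.inner (M.smul x a) (M.smul x a) = star a * M.inner x x * a := by
    rw [M.inner_smul_right, M.inner_smul_left']
  have hb : S.p l (M.inner (M.smul x a) (M.smul x a))
      ≤ (M.q l x * S.p l a) * (M.q l x * S.p l a) := by
    rw [hinner]
    calc S.p l (star a * M.inner x x * a)
        ≤ S.p l (star a * M.inner x x) * S.p l a := S.p_mul l _ _
      _ ≤ S.p l (star a) * S.p l (M.inner x x) * S.p l a :=
          mul_le_mul_of_nonneg_right (S.p_mul l _ _) (apply_nonneg _ _)
      _ = S.p l a * (M.q l x * M.q l x) * S.p l a := by rw [S.p_star, M.q_inner_self]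
      _ = (M.q l x * S.p l a) * (M.q l x * S.p l a) := by ring
  have h2 : M.q l (M.smul x a) * M.q l (M.smul x a)
      ≤ (M.q l x * S.p l a) * (M.q l x * S.p l a) := by
    rw [M.q_sq]; exact hb
  nlinarith [apply_nonneg (M.q l) (M.smul x a), apply_nonneg (M.q l) x,
    apply_nonneg (S.p l) a, mul_nonneg (apply_nonneg (M.q l) x) (apply_nonneg (S.p l) a)]


/-- Cauchy–Schwarz inequality (with constant 3) in a Hilbert pro-C*-module. -/
theorem cauchy_schwarz (M : HilbertMod S X) (l : Λ) (x y : X) :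
    S.p l (M.inner x y) ≤ 3 * (M.q l x * M.q l y) := by
  have hPnn : 0 ≤ S.p l (M.inner x y) := apply_nonneg _ _
  have hQxnn : 0 ≤ M.q l x := apply_nonneg _ _
  have hQynn : 0 ≤ M.q l y := apply_nonneg _ _
  have base : ∀ s : ℝ, 0 < s →
      2 * s * (S.p l (M.inner x y) * S.p l (M.inner x y))
        ≤ 2 * (M.q l y * M.q l y)
          + 2 * (s * M.q l x * S.p l (M.inner x y)) * M.q l y
          + 2 * (s * M.q l x * S.p l (M.inner x y))
              * (s * M.q l x * S.p l (M.inner x y)) := by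
    intro s hs
    have h1 : M.inner y (M.smul ((s : ℂ) • x) (M.inner x y))
        = (s : ℂ) • (star (M.inner x y) * M.inner x y) := by
      rw [M.csmul_smul', M.inner_csmul_right, M.inner_smul_right, ← M.inner_star x y]
    have h2 : M.inner (M.smul ((s : ℂ) • x) (M.inner x y)) y
        = (s : ℂ) • (star (M.inner x y) * M.inner x y) := by
      rw [← M.inner_star y _, h1, S.star_real_smul, star_mul, star_star]
    have hid : M.inner y (M.smul ((s : ℂ) • x) (M.inner x y))
          + M.inner (M.smul ((s : ℂ) • x) (M.inner x y)) y
        = M.inner (y + M.smul ((s : ℂ) • x) (M.inner x y))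
            (y + M.smul ((s : ℂ) • x) (M.inner x y))
          - M.inner y y
          - M.inner (M.smul ((s : ℂ) • x) (M.inner x y))
              (M.smul ((s : ℂ) • x) (M.inner x y)) := by
      rw [M.inner_add_right, M.inner_add_left', M.inner_add_left']
      abel
    have hsum : ((2 * s : ℝ) : ℂ) • (star (M.inner x y) * M.inner x y)
        = M.inner (y + M.smul ((s : ℂ) • x) (M.inner x y))
            (y + M.smul ((s : ℂ) • x) (M.inner x y))
          - M.inner y y
          - M.inner (M.smul ((s : ℂ) • x) (M.inner x y))
              (M.smul ((s : ℂ) • x) (M.inner x y)) := by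
      rw [← hid, h1, h2, ← add_smul]
      congr 1
      push_cast
      ring
    have hleft : S.p l (((2 * s : ℝ) : ℂ) • (star (M.inner x y) * M.inner x y))
        = 2 * s * (S.p l (M.inner x y) * S.p l (M.inner x y)) := by
      rw [map_smul_eq_mul, Complex.norm_real, Real.norm_eq_abs,
        abs_of_pos (by linarith), S.p_cstar]
    have hright : S.p l (M.inner (y + M.smul ((s : ℂ) • x) (M.inner x y))
            (y + M.smul ((s : ℂ) • x) (M.inner x y))
          - M.inner y y
          - M.inner (M.smul ((s : ℂ) • x) (M.inner x y))
              (M.smul ((s : ℂ) • x) (M.inner x y)))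
        ≤ M.q l (y + M.smul ((s : ℂ) • x) (M.inner x y))
            * M.q l (y + M.smul ((s : ℂ) • x) (M.inner x y))
          + M.q l y * M.q l y
          + M.q l (M.smul ((s : ℂ) • x) (M.inner x y))
            * M.q l (M.smul ((s : ℂ) • x) (M.inner x y)) := by
      calc S.p l _ ≤ S.p l (M.inner (y + M.smul ((s : ℂ) • x) (M.inner x y))
              (y + M.smul ((s : ℂ) • x) (M.inner x y)) - M.inner y y)
            + S.p l (M.inner (M.smul ((s : ℂ) • x) (M.inner x y))
              (M.smul ((s : ℂ) • x) (M.inner x y))) := map_sub_le_add _ _ _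
        _ ≤ S.p l (M.inner (y + M.smul ((s : ℂ) • x) (M.inner x y))
              (y + M.smul ((s : ℂ) • x) (M.inner x y)))
            + S.p l (M.inner y y)
            + S.p l (M.inner (M.smul ((s : ℂ) • x) (M.inner x y))
              (M.smul ((s : ℂ) • x) (M.inner x y))) := by
            have := map_sub_le_add (S.p l)
              (M.inner (y + M.smul ((s : ℂ) • x) (M.inner x y))
                (y + M.smul ((s : ℂ) • x) (M.inner x y))) (M.inner y y)
            linarith
        _ = _ := by rw [M.q_inner_self, M.q_inner_self, M.q_inner_self]
    have hqu : M.q l (M.smul ((s : ℂ) • x) (M.inner x y))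
        ≤ s * M.q l x * S.p l (M.inner x y) := by
      calc M.q l (M.smul ((s : ℂ) • x) (M.inner x y))
          ≤ M.q l ((s : ℂ) • x) * S.p l (M.inner x y) := M.q_smul_le l _ _
        _ = s * M.q l x * S.p l (M.inner x y) := by
            rw [map_smul_eq_mul, Complex.norm_real, Real.norm_eq_abs, abs_of_pos hs]
    have hqyu : M.q l (y + M.smul ((s : ℂ) • x) (M.inner x y))
        ≤ M.q l y + s * M.q l x * S.p l (M.inner x y) := by
      calc M.q l (y + M.smul ((s : ℂ) • x) (M.inner x y))
          ≤ M.q l y + M.q l (M.smul ((s : ℂ) • x) (M.inner x y)) := map_add_le_add _ _ _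
        _ ≤ _ := by linarith
    have e1 := mul_self_le_mul_self (apply_nonneg (M.q l) _) hqyu
    have e2 := mul_self_le_mul_self (apply_nonneg (M.q l) _) hqu
    have hchain : 2 * s * (S.p l (M.inner x y) * S.p l (M.inner x y))
        ≤ M.q l (y + M.smul ((s : ℂ) • x) (M.inner x y))
            * M.q l (y + M.smul ((s : ℂ) • x) (M.inner x y))
          + M.q l y * M.q l y
          + M.q l (M.smul ((s : ℂ) • x) (M.inner x y))
            * M.q l (M.smul ((s : ℂ) • x) (M.inner x y)) := by
      rw [← hleft, hsum]
      exact hright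
    nlinarith [e1, e2, hchain]
  rcases eq_or_lt_of_le hPnn with hP0 | hPpos
  · rw [← hP0]
    positivity
  rcases eq_or_lt_of_le hQxnn with hQx0 | hQxpos
  · exfalso
    have hPP : 0 < S.p l (M.inner x y) * S.p l (M.inner x y) := mul_pos hPpos hPpos
    have hs : (0:ℝ) < (2 * (M.q l y * M.q l y) + 1)
        / (2 * (S.p l (M.inner x y) * S.p l (M.inner x y))) := by
      apply div_pos
      · nlinarith
      · linarith
    have hb := base _ hs
    rw [← hQx0] at hb
    have hval : 2 * ((2 * (M.q l y * M.q l y) + 1)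
          / (2 * (S.p l (M.inner x y) * S.p l (M.inner x y))))
          * (S.p l (M.inner x y) * S.p l (M.inner x y))
        = 2 * (M.q l y * M.q l y) + 1 := by
      field_simp [hPpos.ne']
    rw [hval] at hb
    nlinarith
  rcases eq_or_lt_of_le hQynn with hQy0 | hQypos
  · exfalso
    have hs : (0:ℝ) < 1 / (2 * (M.q l x * M.q l x)) := by
      apply div_pos one_pos
      nlinarith
    have hb := base _ hs
    rw [← hQy0] at hb
    have hval : 2 * (1 / (2 * (M.q l x * M.q l x)) * M.q l x * S.p l (M.inner x y))
          * (1 / (2 * (M.q l x * M.q l x)) * M.q l x * S.p l (M.inner x y))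
        = 1 / (2 * (M.q l x * M.q l x))
          * (S.p l (M.inner x y) * S.p l (M.inner x y)) := by
      field_simp [hQxpos.ne']
    rw [hval] at hb
    simp only [mul_zero, zero_mul, add_zero, zero_add] at hb
    nlinarith [mul_pos (mul_pos hs hPpos) hPpos]
  · have hs : (0:ℝ) < M.q l y / (M.q l x * S.p l (M.inner x y)) :=
      div_pos hQypos (mul_pos hQxpos hPpos)
    have hb := base _ hs
    have hsv : M.q l y / (M.q l x * S.p l (M.inner x y)) * M.q l x * S.p l (M.inner x y)
        = M.q l y := by
      field_simp [hQxpos.ne', hPpos.ne']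
    rw [hsv] at hb
    have hval : 2 * (M.q l y / (M.q l x * S.p l (M.inner x y)))
          * (S.p l (M.inner x y) * S.p l (M.inner x y))
        = 2 * M.q l y * S.p l (M.inner x y) / M.q l x := by
      field_simp [hQxpos.ne', hPpos.ne']
    rw [hval] at hb
    rw [div_le_iff₀ hQxpos] at hb
    nlinarith

end HilbertMod

end AuxStmt6

section CStarLevel

open Filter

theorem ProCStar.punit_separating {B : Type} [Ring B] [StarRing B] [Algebra ℂ B]
    (SB : ProCStar PUnit B) {b : B} (h : SB.p PUnit.unit b = 0) : b = 0 :=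
  SB.separating b (fun _ => h)

theorem HilbertMod.eq_zero_of_q_eq_zero {B : Type} [Ring B] [StarRing B] [Algebra ℂ B]
    {SB : ProCStar PUnit B} {Y : Type} [AddCommGroup Y] [Module ℂ Y]
    (N : HilbertMod SB Y) {y : Y} (h : N.q PUnit.unit y = 0) : y = 0 := by
  apply N.inner_self_eq_zero
  apply SB.punit_separating
  rw [← N.q_sq, h, mul_zero]

theorem opSemi_zero_of_pointwise {Λ : Type} [Preorder Λ] {A : Type} [Ring A] [StarRing A]
    [Algebra ℂ A] {S : ProCStar Λ A} {X : Type} [AddCommGroup X] [Module ℂ X]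
    {M : HilbertMod S X} {l : Λ} {T : X → X} (h : ∀ x, M.q l (T x) = 0) :
    opSemi M l T = 0 := by
  have himg : (fun x => M.q l (T x)) '' {x : X | M.q l x ≤ 1} = {0} := by
    apply Set.Subset.antisymm
    · rintro r ⟨x, _, rfl⟩
      exact h x
    · intro r hr
      rw [Set.mem_singleton_iff] at hr
      subst hr
      refine ⟨0, ?_, by simpa using h 0⟩
      show M.q l 0 ≤ 1
      rw [map_zero]
      exact zero_le_one
  unfold opSemi
  rw [himg]
  exact csSup_singleton 0

theorem adjointable_opSemi_zero {B : Type} [Ring B] [StarRing B] [Algebra ℂ B]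
    {SB : ProCStar PUnit B} {Y : Type} [AddCommGroup Y] [Module ℂ Y]
    (N : HilbertMod SB Y) {T : Y → Y} (hT : IsAdjointableOn N T)
    (h0 : opSemi N PUnit.unit T = 0) (y : Y) : T y = 0 := by
  obtain ⟨hadd, hsmul, _hmod, Tst, hadj⟩ := hT
  letI : NormedAddCommGroup Y := AddGroupNorm.toNormedAddCommGroup
    { toFun := fun z => N.q PUnit.unit z
      map_zero' := map_zero _
      add_le' := fun a b => map_add_le_add _ a b
      neg' := fun a => map_neg_eq_map _ a
      eq_zero_of_map_eq_zero' := fun a ha => N.eq_zero_of_q_eq_zero ha }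
  have hnorm : ∀ z : Y, ‖z‖ = N.q PUnit.unit z := fun z => rfl
  letI : NormedSpace ℂ Y :=
    { norm_smul_le := fun c z => le_of_eq (by rw [hnorm, hnorm, map_smul_eq_mul]) }
  haveI : CompleteSpace Y := by
    constructor
    intro f hf
    obtain ⟨hne, hcau⟩ := Metric.cauchy_iff.mp hf
    obtain ⟨y₀, hy₀⟩ := N.complete f hne (fun _ ε hε => by
      obtain ⟨t, htf, ht⟩ := hcau ε hε
      refine ⟨t, htf, fun a ha b hb => ?_⟩
      have h := ht a ha b hb
      rwa [dist_eq_norm, hnorm] at h)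
    refine ⟨y₀, Filter.le_def.mpr fun s hs => ?_⟩
    obtain ⟨ε, hε, hball⟩ := Metric.mem_nhds_iff.mp hs
    obtain ⟨t, htf, ht⟩ := hy₀ PUnit.unit ε hε
    refine Filter.mem_of_superset htf (fun a ha => hball ?_)
    rw [Metric.mem_ball, dist_eq_norm, hnorm]
    exact ht a ha
  let Tl : Y →ₗ[ℂ] Y := { toFun := T, map_add' := hadd, map_smul' := hsmul }
  have hcont : Continuous Tl := by
    apply LinearMap.continuous_of_seq_closed_graph
    intro u a z hu hTz
    have hw : ∀ ε : ℝ, 0 < ε →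
        N.q PUnit.unit (T a - z) * N.q PUnit.unit (T a - z)
          ≤ 3 * ε * (N.q PUnit.unit (Tst (T a - z)) + N.q PUnit.unit (T a - z)) := by
      intro ε hε
      obtain ⟨n₁, hn₁⟩ := Metric.tendsto_atTop.mp hu ε hε
      obtain ⟨n₂, hn₂⟩ := Metric.tendsto_atTop.mp hTz ε hε
      set n := max n₁ n₂ with hn
      have h1 := hn₁ n (le_max_left _ _)
      have h2 := hn₂ n (le_max_right _ _)
      rw [dist_eq_norm, hnorm] at h1 h2
      have h1' : N.q PUnit.unit (a - u n) < ε := by rwa [map_sub_rev] at h1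
      have h2' : N.q PUnit.unit (T (u n) - z) < ε := h2
      have hdecomp : N.inner (T a - z) (T a - z)
          = N.inner (T a - z) (T (a - u n)) + N.inner (T a - z) (T (u n) - z) := by
        rw [← N.inner_add_right]
        congr 1
        have hTsub : T (a - u n) = T a - T (u n) := Tl.map_sub a (u n)
        rw [hTsub]
        abel
      have heq : N.inner (T a - z) (T (a - u n))
          = star (N.inner (a - u n) (Tst (T a - z))) := by
        calc N.inner (T a - z) (T (a - u n))
            = star (N.inner (T (a - u n)) (T a - z)) := (N.inner_star _ _).symm
          _ = star (N.inner (a - u n) (Tst (T a - z))) := by rw [hadj]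
      have hterm1 : SB.p PUnit.unit (N.inner (T a - z) (T (a - u n)))
          ≤ 3 * (N.q PUnit.unit (a - u n) * N.q PUnit.unit (Tst (T a - z))) := by
        rw [heq, SB.p_star]
        exact N.cauchy_schwarz PUnit.unit _ _
      have hterm2 : SB.p PUnit.unit (N.inner (T a - z) (T (u n) - z))
          ≤ 3 * (N.q PUnit.unit (T a - z) * N.q PUnit.unit (T (u n) - z)) :=
        N.cauchy_schwarz PUnit.unit _ _
      have hq2 : N.q PUnit.unit (T a - z) * N.q PUnit.unit (T a - z)
          = SB.p PUnit.unit (N.inner (T a - z) (T a - z)) := N.q_sq _ _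
      have hsum : SB.p PUnit.unit (N.inner (T a - z) (T a - z))
          ≤ SB.p PUnit.unit (N.inner (T a - z) (T (a - u n)))
            + SB.p PUnit.unit (N.inner (T a - z) (T (u n) - z)) := by
        rw [hdecomp]
        exact map_add_le_add _ _ _
      have hnn1 : 0 ≤ N.q PUnit.unit (Tst (T a - z)) := apply_nonneg _ _
      have hnn2 : 0 ≤ N.q PUnit.unit (T a - z) := apply_nonneg _ _
      have hnn3 : 0 ≤ N.q PUnit.unit (a - u n) := apply_nonneg _ _
      have hnn4 : 0 ≤ N.q PUnit.unit (T (u n) - z) := apply_nonneg _ _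
      nlinarith [hterm1, hterm2, hsum, hq2, h1', h2',
        mul_le_mul_of_nonneg_right (le_of_lt h1') hnn1,
        mul_le_mul_of_nonneg_left (le_of_lt h2') hnn2]
    have hqw : N.q PUnit.unit (T a - z) = 0 := by
      set w := N.q PUnit.unit (T a - z) with hwdef
      set c := N.q PUnit.unit (Tst (T a - z)) + N.q PUnit.unit (T a - z) with hc
      have hcnn : 0 ≤ c := add_nonneg (apply_nonneg _ _) (apply_nonneg _ _)
      by_contra hne
      have hpos : 0 < w := lt_of_le_of_ne (apply_nonneg _ _) (Ne.symm hne)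
      have h3 : (0:ℝ) < 3 * c + 1 := by linarith
      have key := hw (w * w / (2 * (3 * c + 1)))
        (div_pos (mul_pos hpos hpos) (by linarith))
      have expand : 3 * (w * w / (2 * (3 * c + 1))) * c ≤ w * w / 2 := by
        have heq2 : 3 * (w * w / (2 * (3 * c + 1))) * c
            = (w * w) * (3 * c) / (2 * (3 * c + 1)) := by ring
        rw [heq2, div_le_div_iff₀ (by linarith) two_pos]
        nlinarith [mul_pos hpos hpos]
      have hfin : w * w ≤ w * w / 2 := le_trans key expand
      nlinarith [mul_pos hpos hpos]
    have hza : T a - z = 0 := N.eq_zero_of_q_eq_zero hqw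
    show z = Tl a
    have : T a = z := by
      have := sub_eq_zero.mp hza
      exact this
    exact this.symm
  let Tc : Y →L[ℂ] Y := ⟨Tl, hcont⟩
  have hbdd : BddAbove ((fun z => N.q PUnit.unit (T z)) '' {z : Y | N.q PUnit.unit z ≤ 1}) := by
    refine ⟨‖Tc‖, ?_⟩
    rintro r ⟨z, hz, rfl⟩
    calc N.q PUnit.unit (T z) = ‖Tc z‖ := (hnorm _).symm
      _ ≤ ‖Tc‖ * ‖z‖ := Tc.le_opNorm z
      _ ≤ ‖Tc‖ * 1 := mul_le_mul_of_nonneg_left (by rw [hnorm]; exact hz) (norm_nonneg _)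
      _ = ‖Tc‖ := mul_one _
  rcases eq_or_lt_of_le (apply_nonneg (N.q PUnit.unit) y) with hq0 | hqpos
  · have hy : y = 0 := N.eq_zero_of_q_eq_zero hq0.symm
    rw [hy]
    exact map_zero Tl
  · have hr : 0 < (N.q PUnit.unit y)⁻¹ := inv_pos.mpr hqpos
    have hmem : (N.q PUnit.unit y)⁻¹ * N.q PUnit.unit (T y)
        ∈ (fun z => N.q PUnit.unit (T z)) '' {z : Y | N.q PUnit.unit z ≤ 1} := by
      refine ⟨(((N.q PUnit.unit y)⁻¹ : ℝ) : ℂ) • y, ?_, ?_⟩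
      · show N.q PUnit.unit ((((N.q PUnit.unit y)⁻¹ : ℝ) : ℂ) • y) ≤ 1
        rw [map_smul_eq_mul, Complex.norm_real, Real.norm_eq_abs, abs_of_pos hr,
          inv_mul_cancel₀ hqpos.ne']
      · show N.q PUnit.unit (T ((((N.q PUnit.unit y)⁻¹ : ℝ) : ℂ) • y))
            = (N.q PUnit.unit y)⁻¹ * N.q PUnit.unit (T y)
        rw [hsmul, map_smul_eq_mul, Complex.norm_real, Real.norm_eq_abs, abs_of_pos hr]
    have hle : (N.q PUnit.unit y)⁻¹ * N.q PUnit.unit (T y) ≤ opSemi N PUnit.unit T :=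
      le_csSup hbdd hmem
    rw [h0] at hle
    have hTy : N.q PUnit.unit (T y) = 0 := by
      have hnn := apply_nonneg (N.q PUnit.unit) (T y)
      nlinarith
    exact N.eq_zero_of_q_eq_zero hTy

end CStarLevel

section Transfer

variable {Λ : Type} [Preorder Λ]
  {A : Type} [Ring A] [StarRing A] [Algebra ℂ A] {S : ProCStar Λ A}
  {X : Type} [AddCommGroup X] [Module ℂ X] {M : HilbertMod S X}
  {C : Corr S M} {l : Λ}
  {B : Type} [Ring B] [StarRing B] [Algebra ℂ B] {SB : ProCStar PUnit B}
  {Y : Type} [AddCommGroup Y] [Module ℂ Y] {N : HilbertMod SB Y} {D : Corr SB N}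
  {piq : A → B} {sig : X → Y}

theorem QuotPres.sig_zero (qp : QuotPres C l SB N D piq sig) : sig 0 = 0 := by
  have h := qp.sig_csmul 0 0
  rw [zero_smul, zero_smul] at h
  exact h

theorem QuotPres.sig_sub (qp : QuotPres C l SB N D piq sig) (x y : X) :
    sig (x - y) = sig x - sig y := by
  have hneg : sig (-y) = - sig y := by
    have h := qp.sig_csmul (-1) y
    rw [neg_one_smul, neg_one_smul] at h
    exact h
  rw [sub_eq_add_neg, qp.sig_add, hneg, sub_eq_add_neg]

theorem QuotPres.q_sig (qp : QuotPres C l SB N D piq sig) (x : X) :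
    N.q PUnit.unit (sig x) = M.q l x := by
  have h : N.q PUnit.unit (sig x) * N.q PUnit.unit (sig x) = M.q l x * M.q l x := by
    rw [N.q_sq, qp.sig_inner, qp.piq_norm, ← M.q_sq]
  exact (mul_self_inj_of_nonneg (apply_nonneg _ _) (apply_nonneg _ _)).mp h

theorem QuotPres.opSemi_transfer (qp : QuotPres C l SB N D piq sig)
    {T : X → X} {T' : Y → Y} (h : ∀ x, T' (sig x) = sig (T x)) :
    opSemi N PUnit.unit T' = opSemi M l T := by
  unfold opSemi
  congr 1
  apply Set.Subset.antisymm
  · rintro r ⟨y, hy, rfl⟩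
    obtain ⟨x, rfl⟩ := qp.sig_surj y
    rw [Set.mem_setOf_eq, qp.q_sig] at hy
    refine ⟨x, hy, ?_⟩
    show M.q l (T x) = N.q PUnit.unit (T' (sig x))
    rw [h, qp.q_sig]
  · rintro r ⟨x, hx, rfl⟩
    refine ⟨sig x, ?_, ?_⟩
    swap
    · show N.q PUnit.unit (T' (sig x)) = M.q l (T x)
      rw [h, qp.q_sig]
    rw [Set.mem_setOf_eq, qp.q_sig]
    exact hx

theorem QuotPres.theta_push (qp : QuotPres C l SB N D piq sig) {k : X → X}
    (hk : k ∈ thetaSpan M) : ∃ k' ∈ thetaSpan N, ∀ x, k' (sig x) = sig (k x) := by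
  induction hk using Submodule.span_induction with
  | mem T hT =>
    obtain ⟨yy, xx, rfl⟩ := hT
    refine ⟨thetaOp N (sig yy) (sig xx), Submodule.subset_span ⟨sig yy, sig xx, rfl⟩,
      fun x => ?_⟩
    show N.smul (sig yy) (N.inner (sig xx) (sig x)) = sig (M.smul yy (M.inner xx x))
    rw [qp.sig_inner, qp.sig_smul]
  | zero =>
    exact ⟨0, Submodule.zero_mem _, fun x => by simp [qp.sig_zero]⟩
  | add f g hf hg ihf ihg =>
    obtain ⟨f', hf', hfc⟩ := ihf
    obtain ⟨g', hg', hgc⟩ := ihg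
    refine ⟨f' + g', Submodule.add_mem _ hf' hg', fun x => ?_⟩
    simp only [Pi.add_apply]
    rw [qp.sig_add, hfc, hgc]
  | smul c f hf ihf =>
    obtain ⟨f', hf', hfc⟩ := ihf
    refine ⟨c • f', Submodule.smul_mem _ c hf', fun x => ?_⟩
    simp only [Pi.smul_apply]
    rw [qp.sig_csmul, hfc]

theorem QuotPres.theta_lift (qp : QuotPres C l SB N D piq sig) {k' : Y → Y}
    (hk : k' ∈ thetaSpan N) : ∃ k ∈ thetaSpan M, ∀ x, k' (sig x) = sig (k x) := by
  induction hk using Submodule.span_induction with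
  | mem T hT =>
    obtain ⟨yy, xx, rfl⟩ := hT
    obtain ⟨y0, rfl⟩ := qp.sig_surj yy
    obtain ⟨x0, rfl⟩ := qp.sig_surj xx
    refine ⟨thetaOp M y0 x0, Submodule.subset_span ⟨y0, x0, rfl⟩, fun x => ?_⟩
    show N.smul (sig y0) (N.inner (sig x0) (sig x)) = sig (M.smul y0 (M.inner x0 x))
    rw [qp.sig_inner, qp.sig_smul]
  | zero =>
    exact ⟨0, Submodule.zero_mem _, fun x => by simp [qp.sig_zero]⟩
  | add f g hf hg ihf ihg =>
    obtain ⟨f', hf', hfc⟩ := ihf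
    obtain ⟨g', hg', hgc⟩ := ihg
    refine ⟨f' + g', Submodule.add_mem _ hf' hg', fun x => ?_⟩
    simp only [Pi.add_apply]
    rw [qp.sig_add, hfc, hgc]
  | smul c f hf ihf =>
    obtain ⟨f', hf', hfc⟩ := ihf
    refine ⟨c • f', Submodule.smul_mem _ c hf', fun x => ?_⟩
    simp only [Pi.smul_apply]
    rw [qp.sig_csmul, hfc]

theorem QuotPres.sub_comm (qp : QuotPres C l SB N D piq sig) (a : A) {k : X → X} {k' : Y → Y}
    (hk : ∀ x, k' (sig x) = sig (k x)) (x : X) :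
    (D.phi (piq a) - k') (sig x) = sig ((C.phi a - k) x) := by
  simp only [Pi.sub_apply]
  rw [qp.sig_sub, qp.phi_comm, hk]

theorem QuotPres.memKlevel_push (qp : QuotPres C l SB N D piq sig) {a : A}
    (h : memKlevel M l (C.phi a)) : memKlevel N PUnit.unit (D.phi (piq a)) := by
  intro ε hε
  obtain ⟨k, hk, hlt⟩ := h ε hε
  obtain ⟨k', hk', hc⟩ := qp.theta_push hk
  refine ⟨k', hk', ?_⟩
  rw [qp.opSemi_transfer (qp.sub_comm a hc)]
  exact hlt

theorem QuotPres.memKlevel_pull (qp : QuotPres C l SB N D piq sig) {a : A}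
    (h : memKlevel N PUnit.unit (D.phi (piq a))) : memKlevel M l (C.phi a) := by
  intro ε hε
  obtain ⟨k', hk', hlt⟩ := h ε hε
  obtain ⟨k, hk, hc⟩ := qp.theta_lift hk'
  refine ⟨k, hk, ?_⟩
  rw [← qp.opSemi_transfer (qp.sub_comm a hc)]
  exact hlt

end Transfer

/-- Let `(X, A, φ_X)` be an inverse limit
pro-C*-correspondence.  Then `π_λ^A(J_X^λ) = J_{X_λ}`, where `J_{X_λ}` is
Katsura's ideal of the quotient C*-correspondence `(X_λ, A_λ, φ_{X_λ})`
(presented by the quotient presentation data `qp`). -/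
theorem stmt_6 {Λ : Type} [Preorder Λ] [Nonempty Λ] [IsDirected Λ (· ≤ ·)]
    {A : Type} [Ring A] [StarRing A] [Algebra ℂ A] {S : ProCStar Λ A}
    {X : Type} [AddCommGroup X] [Module ℂ X] {M : HilbertMod S X}
    (C : Corr S M) (hC : IsInvLimCorr C) (l : Λ)
    {B : Type} [Ring B] [StarRing B] [Algebra ℂ B] (SB : ProCStar PUnit B)
    {Y : Type} [AddCommGroup Y] [Module ℂ Y] (N : HilbertMod SB Y) (D : Corr SB N)
    (piq : A → B) (sig : X → Y) (qp : QuotPres C l SB N D piq sig) :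
    piq '' Jlevel C l = KatsuraIdeal D := by
  ext b₀
  constructor
  · rintro ⟨a, ⟨haK, haN⟩, rfl⟩
    refine ⟨⟨D.phi_adj (piq a), fun u => qp.memKlevel_push haK⟩, fun b' hb' => ?_⟩
    obtain ⟨b, rfl⟩ := qp.piq_surj b'
    have hpoint : ∀ x, M.q l (C.phi b x) = 0 := by
      intro x
      have hzero : sig (C.phi b x) = 0 := by
        rw [← qp.phi_comm, hb']
        rfl
      rw [← qp.q_sig, hzero, map_zero]
    have h0 : opSemi M l (C.phi b) = 0 := opSemi_zero_of_pointwise hpoint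
    have hp : S.p l (a * b) = 0 := haN b h0
    apply SB.punit_separating
    rw [← qp.piq_mul, qp.piq_norm]
    exact hp
  · intro hb₀
    obtain ⟨hK, hann⟩ := hb₀
    obtain ⟨a, rfl⟩ := qp.piq_surj b₀
    refine ⟨a, ⟨qp.memKlevel_pull (hK.2 PUnit.unit), fun b hb => ?_⟩, rfl⟩
    have h1 : opSemi N PUnit.unit (D.phi (piq b)) = 0 := by
      rw [qp.opSemi_transfer (qp.phi_comm b)]
      exact hb
    have h2 : D.phi (piq b) = 0 :=
      funext (adjointable_opSemi_zero N (D.phi_adj (piq b)) h1)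
    have h3 : piq a * piq b = 0 := hann (piq b) h2
    calc S.p l (a * b) = SB.p PUnit.unit (piq (a * b)) := (qp.piq_norm _).symm
      _ = SB.p PUnit.unit (piq a * piq b) := by rw [qp.piq_mul]
      _ = 0 := by rw [h3, map_zero]
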